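/- arXiv:1604.04549 — 4 statements merged into one kernel-verified Lean document; each statement's English description precedes it below -/
import Mathlib

section
/- Let Π(k) ⊆ ℝ² consist of the four corner points π₁ = (0,5), π₂ = (0,0), π₃ = (1,0), π₄ = (1,5) together with the k+1 points (1/2, 5j/k) for 0 ≤ j ≤ k. Then the shortest Hamiltonian path on Π(k) with endpoints π₂ and π₃ has length at least 5 + 5 + 1/2 + 1/2 = 11, while the path π₂, π₁, (1/2, 5), (1/2, 5(k−1)/k), …, (1/2, 0), π₃ — going up the left side, then down the middle column — has length 5 + dist(π₁, (1/2,5)) + 5 + dist((1/2,0), π₃) = 11. -/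
open Metric

noncomputable local instance {n : ℕ} : DecidableEq (EuclideanSpace ℝ (Fin n)) :=
  Classical.decEq _

noncomputable def pt (a b : ℝ) : EuclideanSpace ℝ (Fin 2) :=
  (WithLp.equiv 2 (Fin 2 → ℝ)).symm ![a, b]

noncomputable def plen {α : Type*} [PseudoMetricSpace α] : List α → ℝ
  | [] => 0
  | [_] => 0
  | a :: b :: l => dist a b + plen (b :: l)

/-- The ladder gadget Π(k): four corners and the middle column. -/
noncomputable def PiSet (k : ℕ) : Finset (EuclideanSpace ℝ (Fin 2)) :=
  {pt 0 5, pt 0 0, pt 1 0, pt 1 5} ∪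
    (Finset.range (k + 1)).image (fun j : ℕ => pt (1/2) (5 * (j : ℝ) / k))

/-!
Deleting points from a path never makes it longer, by the triangle inequality. A path from
`π₂` to `π₃` through `Π(k)` visits both top corners `π₁` and `π₄`, so it is at least as long as
`π₂ π₁ π₄ π₃`, of length `5 + 1 + 5`, or as `π₂ π₄ π₁ π₃`, whose two diagonals are longer than
`5`. The explicit path runs `5` up the left side, `1/2` across, `k` steps of `5/k` down the
middle column and `1/2` across.
-/

section PathLength

variable {α : Type*} [PseudoMetricSpace α]

@[simp]
lemma plen_singleton (a : α) : plen [a] = 0 := rfl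

@[simp]
lemma plen_cons_cons (a b : α) (l : List α) : plen (a :: b :: l) = dist a b + plen (b :: l) :=
  rfl

lemma plen_le_plen_cons (a : α) : ∀ l : List α, plen l ≤ plen (a :: l)
  | [] => le_rfl
  | b :: l => by simp only [plen_cons_cons]; linarith [dist_nonneg (x := a) (y := b)]

lemma plen_cons_le_dist_add (a b : α) : ∀ l : List α, plen (a :: l) ≤ dist a b + plen (b :: l)
  | [] => by simp
  | c :: l => by simp only [plen_cons_cons]; linarith [dist_triangle a b c]

lemma List.Sublist.plen_cons_le {l₁ l₂ : List α} (h : l₁.Sublist l₂) (a : α) :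
    plen (a :: l₁) ≤ plen (a :: l₂) := by
  induction h generalizing a with
  | slnil => exact le_rfl
  | cons b _ ih =>
    simpa only [plen_cons_cons] using
      (plen_cons_le_dist_add a b _).trans (add_le_add_right (ih b) (dist a b))
  | cons_cons b _ ih => simpa only [plen_cons_cons] using add_le_add_right (ih b) (dist a b)

lemma List.Sublist.plen_le {l₁ l₂ : List α} (h : l₁.Sublist l₂) : plen l₁ ≤ plen l₂ := by
  induction h with
  | slnil => exact le_rfl
  | cons b _ ih => exact ih.trans (plen_le_plen_cons b _)
  | cons_cons b h _ => exact h.plen_cons_le b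

lemma plen_append_cons : ∀ (l₁ : List α) (x : α) (l₂ : List α),
    plen (l₁ ++ x :: l₂) = plen (l₁ ++ [x]) + plen (x :: l₂)
  | [], _, _ => by simp
  | [a], x, l₂ => by simp
  | a :: b :: l₁, x, l₂ => by
    show dist a b + plen ((b :: l₁) ++ x :: l₂) = dist a b + plen ((b :: l₁) ++ [x]) + _
    rw [plen_append_cons (b :: l₁), add_assoc]

lemma plen_map_range_append (g : ℕ → α) (c : α) : ∀ n : ℕ,
    plen ((List.range (n + 1)).map g ++ [c]) =
      ∑ i ∈ Finset.range n, dist (g i) (g (i + 1)) + dist (g n) c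
  | 0 => by simp
  | n + 1 => by
    rw [List.range_succ, List.map_append, List.append_assoc, List.map_singleton,
      List.singleton_append, plen_append_cons, plen_map_range_append g (g (n + 1)) n,
      Finset.sum_range_succ, plen_cons_cons, plen_singleton, add_zero]

lemma plen_cons_map_range_append (a : α) (g : ℕ → α) (n : ℕ) (l : List α) :
    plen (a :: ((List.range (n + 1)).map g ++ l)) =
      dist a (g 0) + plen ((List.range (n + 1)).map g ++ l) := by
  rw [List.range_succ_eq_map]
  rfl

end PathLength

namespace List

variable {α : Type*}

lemma pair_sublist_or_pair_sublist {a b : α} {l : List α} (ha : a ∈ l) (hb : b ∈ l)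
    (hab : a ≠ b) : [a, b] <+ l ∨ [b, a] <+ l := by
  obtain ⟨s, t, rfl⟩ := append_of_mem ha
  rcases mem_append.mp hb with hb | hb
  · exact .inr <| (singleton_sublist.mpr hb).append (singleton_sublist.mpr mem_cons_self)
  · have hb : b ∈ t := (mem_cons.mp hb).resolve_left hab.symm
    exact .inl <| ((singleton_sublist.mpr hb).cons_cons a).trans (sublist_append_right s _)

lemma exists_eq_cons_append_of_head?_getD {l : List α} {a d : α} (had : a ≠ d)
    (h₀ : l.head?.getD a = a) (h₁ : l.getLast?.getD a = d) : ∃ m, l = a :: (m ++ [d]) := by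
  rcases l with _ | ⟨x, t⟩
  · exact absurd h₁ (by simpa using had)
  · obtain rfl : x = a := by simpa using h₀
    rcases eq_nil_or_concat t with rfl | ⟨m, y, rfl⟩
    · exact absurd h₁ (by simpa using had)
    · refine ⟨m, ?_⟩
      simp only [getLast?_cons] at h₁
      simp_all

end List

lemma pt_inj {a b c d : ℝ} : pt a b = pt c d ↔ a = c ∧ b = d := by
  constructor
  · intro h
    exact ⟨by simpa [pt] using congrArg (· 0) h, by simpa [pt] using congrArg (· 1) h⟩
  · rintro ⟨rfl, rfl⟩
    rfl

lemma dist_pt (a b c d : ℝ) : dist (pt a b) (pt c d) = √((a - c) ^ 2 + (b - d) ^ 2) := by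
  simp [EuclideanSpace.dist_eq, pt, Fin.sum_univ_two, Real.dist_eq, sq_abs]

lemma dist_pt_of_fst_eq (a b d : ℝ) : dist (pt a b) (pt a d) = |b - d| := by
  simp [dist_pt, Real.sqrt_sq_eq_abs]

lemma dist_pt_of_snd_eq (a b c : ℝ) : dist (pt a b) (pt c b) = |a - c| := by
  simp [dist_pt, Real.sqrt_sq_eq_abs]

lemma abs_sub_le_dist_pt (a b c d : ℝ) : |b - d| ≤ dist (pt a b) (pt c d) := by
  rw [dist_pt, ← Real.sqrt_sq_eq_abs]
  exact Real.sqrt_le_sqrt (by nlinarith [sq_nonneg (a - c)])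

lemma eleven_le_plen_of_mem {m : List (EuclideanSpace ℝ (Fin 2))} (h₁ : pt 0 5 ∈ m)
    (h₄ : pt 1 5 ∈ m) : 11 ≤ plen (pt 0 0 :: (m ++ [pt 1 0])) := by
  have corners_le {b c} (h : [b, c].Sublist m) :
      plen [pt 0 0, b, c, pt 1 0] ≤ plen (pt 0 0 :: (m ++ [pt 1 0])) :=
    ((h.append (List.Sublist.refl [pt 1 0])).cons_cons (pt 0 0)).plen_le
  rcases List.pair_sublist_or_pair_sublist h₁ h₄ (by simp [pt_inj]) with h | h
  · have := corners_le h
    simp only [plen_cons_cons, plen_singleton, dist_pt_of_fst_eq, dist_pt_of_snd_eq] at this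
    norm_num at this
    linarith
  · have h₂₄ := abs_sub_le_dist_pt 0 0 1 5
    have h₁₃ := abs_sub_le_dist_pt 0 5 1 0
    have := corners_le h
    simp only [plen_cons_cons, plen_singleton, dist_pt_of_snd_eq] at this
    norm_num at h₂₄ h₁₃ this
    linarith

lemma plen_ladder_path {k : ℕ} (hk : k ≠ 0) :
    plen ((pt 0 0) :: (pt 0 5) ::
        ((List.range (k + 1)).map (fun j => pt (1/2) (5 * ((k : ℝ) - j) / k))
          ++ [pt 1 0])) = 11 := by
  set g : ℕ → EuclideanSpace ℝ (Fin 2) := fun j => pt (1/2) (5 * ((k : ℝ) - j) / k)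
  have hstep (i : ℕ) : dist (g i) (g (i + 1)) = 5 / k := by
    rw [dist_pt_of_fst_eq, show 5 * ((k : ℝ) - i) / k - 5 * (k - ↑(i + 1)) / k = 5 / k by
      push_cast; field_simp; ring]
    exact abs_of_nonneg (by positivity)
  have htop : g 0 = pt (1/2) 5 := by simp only [g]; congr 1; field_simp; simp
  have hbot : g k = pt (1/2) 0 := by simp [g]
  -- `j` is real here: `List.range (k + 1)` is coerced to `List ℝ` through the list monad.
  simp only [bind_pure_comp, List.map_eq_map, List.map_map]
  rw [show (fun j : ℝ => pt (1/2) (5 * ((k : ℝ) - j) / k)) ∘ ((↑) : ℕ → ℝ) = g from rfl,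
    plen_cons_cons, plen_cons_map_range_append, plen_map_range_append, htop, hbot,
    Finset.sum_congr rfl fun i _ => hstep i, dist_pt_of_fst_eq, dist_pt_of_snd_eq,
    dist_pt_of_snd_eq]
  simp only [Finset.sum_const, Finset.card_range, nsmul_eq_mul]
  field_simp
  norm_num

/-- the shortest Hamiltonian path on Π(k) with endpoints π₂, π₃ has
length at least 11, and the explicit path down the left side and through the middle
column has length exactly 11. -/
theorem stmt5 (k : ℕ) (hk : 1 ≤ k) :
    (∀ l : List (EuclideanSpace ℝ (Fin 2)),
        l.Nodup → l.toFinset = PiSet k →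
        l.head?.getD (pt 0 0) = pt 0 0 → l.getLast?.getD (pt 0 0) = pt 1 0 →
        plen l ≥ 11) ∧
    plen ((pt 0 0) :: (pt 0 5) ::
        ((List.range (k + 1)).map (fun j => pt (1/2) (5 * ((k : ℝ) - j) / k))
          ++ [pt 1 0])) = 11 := by
  refine ⟨fun l _ hl h₀ h₁ => ?_, plen_ladder_path (by omega)⟩
  obtain ⟨m, rfl⟩ := List.exists_eq_cons_append_of_head?_getD (by simp [pt_inj]) h₀ h₁
  have h_mem {p} (hp : p ∈ PiSet k) (hp₂ : p ≠ pt 0 0) (hp₃ : p ≠ pt 1 0) : p ∈ m := by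
    rw [← hl, List.mem_toFinset] at hp
    simpa [hp₂, hp₃] using hp
  exact eleven_le_plen_of_mem (h_mem (by simp [PiSet]) (by simp [pt_inj]) (by simp [pt_inj]))
    (h_mem (by simp [PiSet]) (by simp [pt_inj]) (by simp [pt_inj]))
end

section
/- Let p ∈ ℝ² and ε > 0, and let p_ε be uniformly distributed on the closed ball B(p, ε). Let q ∈ ℝ² with dist(p, q) ≥ 2ε. Then for any two points x, y ∈ ℝ² with |dist(q, x) − dist(q, y)| ≤ ε/100 and dist(x,y) ≥ ε, if x_ε, y_ε are independent uniform perturbations in balls of radius ε about x and y respectively, then P(dist(q, x_ε) < dist(q, y_ε)) ≥ 1/4. -/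
/-!
Write `D_X = dist q X` and `D_Y = dist q Y`. A rigid motion of the plane carrying `y` to `x`
moves distances to `q` by at most `δ = |dist q x - dist q y| ≤ ε / 100`, so
`P(D_Y ≤ t - ε / 100) ≤ P(D_X ≤ t)`. The perturbed point `Y` lands in an annulus of width
`ε / 100` about `q` with probability at most `1 / 4`: for `t ≤ 12 ε` because the annulus has
small area, and for larger `t` because near `B(y, ε)` the annulus lies in a straight strip of
width `ε / 100 + ε / 18`. Together, `P(D_Y ≤ t) ≤ P(D_X < t) + 1 / 4` for every `t`. Integrating
over an independent copy of `Y`, and using that two i.i.d. variables satisfy `D_Y' ≤ D_Y` with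
probability at least `1 / 2`, gives `P(D_X < D_Y) ≥ 1 / 2 - 1 / 4`.
-/

open Metric MeasureTheory

/-- The uniform probability measure on the closed ball of radius ε about x. -/
noncomputable def unifBall (x : EuclideanSpace ℝ (Fin 2)) (ε : ℝ) :
    Measure (EuclideanSpace ℝ (Fin 2)) :=
  (volume (closedBall x ε))⁻¹ • volume.restrict (closedBall x ε)

open scoped RealInnerProductSpace ENNReal

section InnerProductSpace

variable {E : Type*} [NormedAddCommGroup E] [InnerProductSpace ℝ E]

theorem exists_linearIsometryEquiv_apply_eq {u v : E} (h : ‖u‖ = ‖v‖) :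
    ∃ ρ : E ≃ₗᵢ[ℝ] E, ρ u = v :=
  ⟨_, Submodule.reflection_sub h⟩

theorem exists_norm_eq_one_and_norm_smul_eq [Nontrivial E] (v : E) :
    ∃ u : E, ‖u‖ = 1 ∧ ‖v‖ • u = v := by
  rcases eq_or_ne v 0 with rfl | hv
  · obtain ⟨u, hu⟩ := exists_norm_eq E zero_le_one
    exact ⟨u, hu, by simp⟩
  · exact ⟨‖v‖⁻¹ • v, by simp [norm_smul, hv], by simp [smul_smul, hv]⟩

/-- Rotate `y - q` onto the ray from `q` through `x`, then slide along that ray. -/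
theorem exists_isometry_apply_eq_dist_le_add [Nontrivial E] (q x y : E) :
    ∃ (ρ : E ≃ₗᵢ[ℝ] E) (c : E), ρ y + c = x ∧
      ∀ w, dist (ρ w + c) q ≤ dist w q + |dist q x - dist q y| := by
  obtain ⟨u, hu, hxu⟩ := exists_norm_eq_one_and_norm_smul_eq (x - q)
  obtain ⟨ρ, hρ⟩ := exists_linearIsometryEquiv_apply_eq
    (u := y - q) (v := ‖y - q‖ • u) (by simp [norm_smul, hu])
  refine ⟨ρ, q - ρ q + (‖x - q‖ - ‖y - q‖) • u, ?_, fun w => ?_⟩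
  · rw [sub_smul, hxu, ← hρ, map_sub]
    abel
  · have hw : ρ w + (q - ρ q + (‖x - q‖ - ‖y - q‖) • u) - q
        = ρ (w - q) + (‖x - q‖ - ‖y - q‖) • u := by
      rw [map_sub]; abel
    calc dist (ρ w + (q - ρ q + (‖x - q‖ - ‖y - q‖) • u)) q
        ≤ ‖ρ (w - q)‖ + ‖(‖x - q‖ - ‖y - q‖) • u‖ := by
          rw [dist_eq_norm, hw]; exact norm_add_le _ _
      _ = dist w q + |dist q x - dist q y| := by
          rw [ρ.norm_map, norm_smul, hu, mul_one, Real.norm_eq_abs, dist_eq_norm,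
            dist_comm q x, dist_comm q y, dist_eq_norm, dist_eq_norm]

theorem sub_inner_le_norm_sub_smul (v : E) {e : E} (he : ‖e‖ = 1) (s : ℝ) :
    s - ⟪v, e⟫ ≤ ‖v - s • e‖ :=
  calc s - ⟪v, e⟫ = ⟪s • e - v, e⟫ := by
        rw [inner_sub_left, real_inner_smul_left, real_inner_self_eq_norm_sq, he]; ring
    _ ≤ ‖s • e - v‖ * ‖e‖ := real_inner_le_norm _ _
    _ = ‖v - s • e‖ := by rw [he, mul_one, norm_sub_rev]

theorem norm_sub_smul_sq_le (v : E) {e : E} (he : ‖e‖ = 1) (s : ℝ) :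
    ‖v - s • e‖ ^ 2 ≤ ‖v‖ ^ 2 + (s - ⟪v, e⟫) ^ 2 := by
  rw [norm_sub_sq_real, real_inner_smul_right, norm_smul, he, Real.norm_eq_abs, mul_one, sq_abs]
  nlinarith [sq_nonneg ⟪v, e⟫]

end InnerProductSpace

section Comparison

variable {α : Type*} [MeasurableSpace α] {f : α → ℝ}

theorem one_half_le_prod_setOf_le (ν : Measure α) [IsProbabilityMeasure ν] (hf : Measurable f) :
    1 / 2 ≤ (ν.prod ν) {p | f p.1 ≤ f p.2} := by
  set U := {p : α × α | f p.1 ≤ f p.2}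
  have hU : MeasurableSet U := measurableSet_le (hf.comp measurable_fst) (hf.comp measurable_snd)
  have hswap : (ν.prod ν) (Prod.swap ⁻¹' U) = (ν.prod ν) U := by
    rw [← Measure.map_apply measurable_swap hU, Measure.prod_swap]
  have hcover : Set.univ ⊆ U ∪ Prod.swap ⁻¹' U := fun p _ => le_total (f p.1) (f p.2)
  rw [ENNReal.div_le_iff two_ne_zero ENNReal.ofNat_ne_top, mul_two]
  calc 1 = (ν.prod ν) Set.univ := measure_univ.symm
    _ ≤ (ν.prod ν) U + (ν.prod ν) (Prod.swap ⁻¹' U) :=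
      (measure_mono hcover).trans (measure_union_le _ _)
    _ = (ν.prod ν) U + (ν.prod ν) U := by rw [hswap]

theorem one_half_le_prod_setOf_lt_add (μ ν : Measure α) [SFinite μ] [IsProbabilityMeasure ν]
    (hf : Measurable f) {c : ℝ≥0∞} (h : ∀ t, ν {a | f a ≤ t} ≤ μ {a | f a < t} + c) :
    1 / 2 ≤ (μ.prod ν) {p | f p.1 < f p.2} + c := by
  have hlt : MeasurableSet {p : α × α | f p.1 < f p.2} :=
    measurableSet_lt (hf.comp measurable_fst) (hf.comp measurable_snd)
  have hle : MeasurableSet {p : α × α | f p.1 ≤ f p.2} :=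
    measurableSet_le (hf.comp measurable_fst) (hf.comp measurable_snd)
  calc 1 / 2 ≤ (ν.prod ν) {p | f p.1 ≤ f p.2} := one_half_le_prod_setOf_le ν hf
    _ = ∫⁻ b, ν {a | f a ≤ f b} ∂ν := Measure.prod_apply_symm hle
    _ ≤ ∫⁻ b, (μ {a | f a < f b} + c) ∂ν := lintegral_mono fun b => h (f b)
    _ = (μ.prod ν) {p | f p.1 < f p.2} + c := by
      rw [lintegral_add_right _ measurable_const, lintegral_const, measure_univ, mul_one,
        Measure.prod_apply_symm hlt]
      rfl

end Comparison

local notation "ℝ²" => EuclideanSpace ℝ (Fin 2)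

section Volume

theorem volume_closedBall_fin_two_of_nonneg (x : ℝ²) {r : ℝ} (hr : 0 ≤ r) :
    volume (closedBall x r) = .ofReal (Real.pi * r ^ 2) := by
  rw [EuclideanSpace.volume_closedBall_fin_two, ← ENNReal.ofReal_pow hr,
    ← ENNReal.ofReal_mul (by positivity), mul_comm]

theorem volume_closedBall_sdiff_closedBall_le (q : ℝ²) (t : ℝ) {δ : ℝ} (hδ : 0 ≤ δ) :
    volume (closedBall q t \ closedBall q (t - δ)) ≤ .ofReal (Real.pi * (2 * t * δ)) := by
  rcases lt_or_ge t 0 with ht | ht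
  · simp [closedBall_eq_empty.2 ht]
  rcases lt_or_ge t δ with htδ | htδ
  · calc volume (closedBall q t \ closedBall q (t - δ)) ≤ volume (closedBall q t) :=
          measure_mono Set.sdiff_subset
      _ ≤ .ofReal (Real.pi * (2 * t * δ)) := by
          rw [volume_closedBall_fin_two_of_nonneg q ht]
          gcongr
          nlinarith
  · rw [measure_sdiff (closedBall_subset_closedBall (by linarith))
      measurableSet_closedBall.nullMeasurableSet measure_closedBall_lt_top.ne,
      volume_closedBall_fin_two_of_nonneg q ht,
      volume_closedBall_fin_two_of_nonneg q (by linarith), ← ENNReal.ofReal_sub _ (by positivity)]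
    gcongr
    nlinarith [mul_nonneg Real.pi_pos.le (sq_nonneg δ)]

theorem volume_rectangle_fin_two (s t : Set ℝ) :
    volume {u : ℝ² | u 0 ∈ s ∧ u 1 ∈ t} = volume s * volume t := by
  have hset : {u : ℝ² | u 0 ∈ s ∧ u 1 ∈ t}
      = (MeasurableEquiv.toLp 2 (Fin 2 → ℝ)).symm ⁻¹' Set.univ.pi ![s, t] := by
    ext u
    simp [Fin.forall_fin_two]
  rw [hset,
    (EuclideanSpace.volume_preserving_symm_measurableEquiv_toLp (Fin 2)).measure_preimage_equiv,
    volume_pi_pi]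
  simp [Fin.prod_univ_two]

/-- A rotation taking `e` to the first basis vector puts the slab inside a rectangle. -/
theorem volume_closedBall_inter_slab_le (y e : ℝ²) (he : ‖e‖ = 1) {ε : ℝ} (hε : 0 ≤ ε)
    (α β : ℝ) :
    volume {w ∈ closedBall y ε | ⟪w - y, e⟫ ∈ Set.Icc α β} ≤ .ofReal ((β - α) * (2 * ε)) := by
  obtain ⟨ρ, hρ⟩ := exists_linearIsometryEquiv_apply_eq
    (u := e) (v := EuclideanSpace.single 0 1) (by simp [he])
  have hmp : MeasurePreserving (fun w => ρ (w - y)) volume volume :=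
    ρ.measurePreserving.comp (measurePreserving_sub_right volume y)
  have hsub : {w ∈ closedBall y ε | ⟪w - y, e⟫ ∈ Set.Icc α β}
      ⊆ (fun w => ρ (w - y)) ⁻¹' {u | u 0 ∈ Set.Icc α β ∧ u 1 ∈ Set.Icc (-ε) ε} := by
    rintro w ⟨hwy, hw⟩
    refine ⟨?_, abs_le.mp ?_⟩
    · have h0 : ρ (w - y) 0 = ⟪w - y, e⟫ := by
        rw [← ρ.inner_map_map, hρ, EuclideanSpace.inner_single_right]
        simp
      exact h0 ▸ hw
    · calc |ρ (w - y) 1| ≤ ‖ρ (w - y)‖ := PiLp.norm_apply_le (ρ (w - y)) 1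
        _ ≤ ε := by rwa [ρ.norm_map, ← dist_eq_norm]
  calc volume {w ∈ closedBall y ε | ⟪w - y, e⟫ ∈ Set.Icc α β}
      ≤ volume {u : ℝ² | u 0 ∈ Set.Icc α β ∧ u 1 ∈ Set.Icc (-ε) ε} :=
        (measure_mono hsub).trans (hmp.measure_preimage_le _)
    _ = .ofReal ((β - α) * (2 * ε)) := by
        rw [volume_rectangle_fin_two, Real.volume_Icc, Real.volume_Icc,
          ← ENNReal.ofReal_mul' (by linarith), sub_neg_eq_add, two_mul]

end Volume

section UnifBall

variable {x y : ℝ²} {ε : ℝ}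

theorem unifBall_apply (A : Set ℝ²) :
    unifBall x ε A = (volume (closedBall x ε))⁻¹ * volume (A ∩ closedBall x ε) := by
  rw [unifBall, Measure.smul_apply, Measure.restrict_apply' measurableSet_closedBall,
    smul_eq_mul]

theorem isProbabilityMeasure_unifBall (hε : 0 < ε) : IsProbabilityMeasure (unifBall x ε) :=
  ⟨by rw [unifBall_apply, Set.univ_inter, ENNReal.inv_mul_cancel
    (measure_closedBall_pos _ _ hε).ne' measure_closedBall_lt_top.ne]⟩

theorem unifBall_ball (q : ℝ²) (t : ℝ) :
    unifBall x ε (ball q t) = unifBall x ε (closedBall q t) := by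
  have hsphere : unifBall x ε (sphere q t) = 0 := by
    rw [unifBall_apply, measure_mono_null Set.inter_subset_left
      (Measure.addHaar_sphere volume q t), mul_zero]
  rw [← ball_union_sphere,
    measure_congr (union_ae_eq_left_of_ae_eq_empty (ae_eq_empty.mpr hsphere))]

theorem unifBall_le_ofReal (hε : 0 < ε) {A : Set ℝ²} {c : ℝ}
    (h : volume (A ∩ closedBall x ε) ≤ .ofReal (c * (Real.pi * ε ^ 2))) :
    unifBall x ε A ≤ .ofReal c := by
  have hpos : 0 < Real.pi * ε ^ 2 := by positivity
  rw [unifBall_apply, volume_closedBall_fin_two_of_nonneg x hε.le,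
    ENNReal.inv_mul_le_iff (by simpa using hpos) ENNReal.ofReal_ne_top,
    ← ENNReal.ofReal_mul hpos.le, mul_comm]
  exact h

theorem unifBall_preimage_isometry (ρ : ℝ² ≃ₗᵢ[ℝ] ℝ²) {c : ℝ²} (h : ρ y + c = x)
    {A : Set ℝ²} (hA : MeasurableSet A) :
    unifBall y ε ((fun w => ρ w + c) ⁻¹' A) = unifBall x ε A := by
  have hmp : MeasurePreserving (fun w => ρ w + c) volume volume :=
    (measurePreserving_add_right volume c).comp ρ.measurePreserving
  have hball : (fun w => ρ w + c) ⁻¹' closedBall x ε = closedBall y ε := by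
    ext w
    simp only [Set.mem_preimage, mem_closedBall, ← h, dist_add_right,
      LinearIsometryEquiv.dist_map]
  rw [unifBall_apply, unifBall_apply, ← hball, ← Set.preimage_inter,
    hmp.measure_preimage (hA.inter measurableSet_closedBall).nullMeasurableSet,
    hmp.measure_preimage measurableSet_closedBall.nullMeasurableSet]

theorem unifBall_closedBall_sub_le (q : ℝ²) (t : ℝ) :
    unifBall y ε (closedBall q (t - |dist q x - dist q y|)) ≤ unifBall x ε (closedBall q t) := by
  obtain ⟨ρ, c, hρc, hdist⟩ := exists_isometry_apply_eq_dist_le_add q x y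
  rw [← unifBall_preimage_isometry ρ hρc measurableSet_closedBall]
  refine measure_mono fun w hw => ?_
  rw [mem_closedBall] at hw
  exact (hdist w).trans (by linarith)

theorem unifBall_annulus_le (q : ℝ²) (hε : 0 < ε) (t : ℝ) :
    unifBall y ε (closedBall q t \ closedBall q (t - ε / 100)) ≤ 1 / 4 := by
  rw [show (1 / 4 : ℝ≥0∞) = .ofReal (1 / 4) by rw [ENNReal.ofReal_div_of_pos] <;> simp]
  apply unifBall_le_ofReal hε
  rcases le_or_gt t (12 * ε) with ht | ht
  · calc volume ((closedBall q t \ closedBall q (t - ε / 100)) ∩ closedBall y ε)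
        ≤ volume (closedBall q t \ closedBall q (t - ε / 100)) :=
          measure_mono Set.inter_subset_left
      _ ≤ .ofReal (Real.pi * (2 * t * (ε / 100))) :=
          volume_closedBall_sdiff_closedBall_le q t (by positivity)
      _ ≤ .ofReal (1 / 4 * (Real.pi * ε ^ 2)) := by
          have : 2 * t * (ε / 100) ≤ 1 / 4 * ε ^ 2 := by nlinarith
          apply ENNReal.ofReal_le_ofReal
          nlinarith [mul_le_mul_of_nonneg_left this Real.pi_pos.le]
  obtain ⟨e, he, hqy⟩ := exists_norm_eq_one_and_norm_smul_eq (q - y)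
  set s := ‖q - y‖
  -- `s - ⟪w - y, e⟫ ≥ 9 ε`, so `norm_sub_smul_sq_le` puts it within `ε / 18` of `dist w q`.
  have hsub : (closedBall q t \ closedBall q (t - ε / 100)) ∩ closedBall y ε ⊆
      {w ∈ closedBall y ε | ⟪w - y, e⟫ ∈ Set.Icc (s - t) (s - t + (ε / 100 + ε / 18))} := by
    rintro w ⟨⟨hwt, hwt'⟩, hwy⟩
    rw [mem_closedBall] at hwt hwt' hwy
    have hd : dist w q = ‖(w - y) - s • e‖ := by
      rw [hqy, dist_eq_norm]; congr 1; abel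
    have hv : ‖w - y‖ ≤ ε := by rwa [← dist_eq_norm]
    have hlow := sub_inner_le_norm_sub_smul (w - y) he s
    have hup := norm_sub_smul_sq_le (w - y) he s
    have hc : ⟪w - y, e⟫ ≤ ε := (real_inner_le_norm _ _).trans (by rw [he, mul_one]; exact hv)
    have hs : dist w q ≤ ‖w - y‖ + s :=
      calc dist w q = ‖(w - y) - s • e‖ := hd
        _ ≤ ‖w - y‖ + ‖s • e‖ := norm_sub_le _ _
        _ = ‖w - y‖ + s := by rw [norm_smul, he, mul_one, norm_norm]
    refine ⟨hwy, by linarith, ?_⟩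
    nlinarith [norm_nonneg (w - y), dist_nonneg (x := w) (y := q)]
  calc volume ((closedBall q t \ closedBall q (t - ε / 100)) ∩ closedBall y ε)
      ≤ .ofReal ((s - t + (ε / 100 + ε / 18) - (s - t)) * (2 * ε)) :=
        (measure_mono hsub).trans (volume_closedBall_inter_slab_le y e he hε.le _ _)
    _ ≤ .ofReal (1 / 4 * (Real.pi * ε ^ 2)) := by
        apply ENNReal.ofReal_le_ofReal
        nlinarith [Real.pi_gt_three]

end UnifBall

theorem stmt11_general (q x y : EuclideanSpace ℝ (Fin 2)) (ε : ℝ) (hε : 0 < ε)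
    (htie : |dist q x - dist q y| ≤ ε / 100) :
    (1 : ENNReal) / 4 ≤
      ((unifBall x ε).prod (unifBall y ε))
        {w : EuclideanSpace ℝ (Fin 2) × EuclideanSpace ℝ (Fin 2) |
          dist q w.1 < dist q w.2} := by
  have := isProbabilityMeasure_unifBall (x := x) hε
  have := isProbabilityMeasure_unifBall (x := y) hε
  have hcdf (t : ℝ) :
      unifBall y ε {w | dist w q ≤ t} ≤ unifBall x ε {w | dist w q < t} + 1 / 4 :=
    calc unifBall y ε (closedBall q t)
        ≤ unifBall y ε (closedBall q (t - ε / 100))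
          + unifBall y ε (closedBall q t \ closedBall q (t - ε / 100)) :=
          (measure_le_inter_add_sdiff _ _ _).trans
            (add_le_add_left (measure_mono Set.inter_subset_right) _)
      _ ≤ unifBall x ε (closedBall q t) + 1 / 4 := by
          gcongr ?_ + ?_
          · exact (measure_mono (closedBall_subset_closedBall (by linarith))).trans
              (unifBall_closedBall_sub_le q t)
          · exact unifBall_annulus_le q hε t
      _ = unifBall x ε (ball q t) + 1 / 4 := by rw [unifBall_ball]
  have hhalf := one_half_le_prod_setOf_lt_add (unifBall x ε) (unifBall y ε)
    (continuous_id.dist continuous_const).measurable hcdf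
  have hquarters : (1 : ℝ≥0∞) / 2 = 1 / 4 + 1 / 4 := by
    rw [ENNReal.div_add_div_same, ENNReal.div_eq_div_iff] <;> norm_num
  rw [hquarters] at hhalf
  simp_rw [dist_comm q]
  exact (ENNReal.add_le_add_iff_right (by simp)).mp hhalf

/-- anti-concentration for near-ties: if dist(q,x) and dist(q,y) agree
to within ε/100 and x, y are at distance at least ε, then after independent uniform
ε-perturbations of x and y, the perturbed x is strictly closer to q with probability
at least 1/4. -/
theorem stmt11 (p q x y : EuclideanSpace ℝ (Fin 2)) (ε : ℝ) (hε : 0 < ε)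
    (hpq : 2 * ε ≤ dist p q)
    (htie : |dist q x - dist q y| ≤ ε / 100)
    (hxy : ε ≤ dist x y) :
    (1 : ENNReal) / 4 ≤
      ((unifBall x ε).prod (unifBall y ε))
        {w : EuclideanSpace ℝ (Fin 2) × EuclideanSpace ℝ (Fin 2) |
          dist q w.1 < dist q w.2} :=
  stmt11_general q x y ε hε htie
end

section
/- Let w, z, α ∈ ℝ² and let ∠(w, α, z) denote the angle at α in triangle w α z. If ∠(w, α, z) ≤ π − γ for some γ > 0, then dist(w, α) + dist(α, z) − dist(w, z) ≥ (1 − cos(γ/2)) · min(dist(w, α), dist(α, z)). -/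
open Metric EuclideanGeometry Real

/-- Algebraic core: law of cosines plus half-angle bound. -/
lemma stmt17_key (a b c s k : ℝ) (ha : 0 ≤ a) (hab : a ≤ b) (_hc : 0 ≤ c)
    (hs : 0 ≤ s) (hsk : s ≤ k) (hk : k ≤ 1)
    (hlaw : c * c = a * a + b * b - 2 * a * b * (1 - 2 * s ^ 2)) :
    a + b - c ≥ (1 - k) * a := by
  have hble : c ≤ b - a + 2 * a * s := by
    have h2 : c ^ 2 ≤ (b - a + 2 * a * s) ^ 2 := by
      nlinarith [mul_nonneg (mul_nonneg (mul_nonneg ha (sub_nonneg.2 hab)) hs)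
        (sub_nonneg.2 (hsk.trans hk))]
    have hX : 0 ≤ b - a + 2 * a * s := by nlinarith
    exact le_of_pow_le_pow_left₀ two_ne_zero hX h2
  nlinarith [mul_nonneg ha (sub_nonneg.2 (hsk.trans hk))]

/-- quantitative shortcut gain: if the angle at α in the triangle
w α z is at most π − γ, then passing through α costs a definite detour. -/
theorem stmt17 (w z α : EuclideanSpace ℝ (Fin 2)) (γ : ℝ) (hγ : 0 < γ)
    (hangle : ∠ w α z ≤ Real.pi - γ) :
    dist w α + dist α z - dist w z ≥
      (1 - Real.cos (γ / 2)) * min (dist w α) (dist α z) := by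
  set θ := ∠ w α z with hθ
  have hθ0 : 0 ≤ θ := EuclideanGeometry.angle_nonneg _ _ _
  have hθpi : θ ≤ Real.pi := EuclideanGeometry.angle_le_pi _ _ _
  have hγpi : γ ≤ Real.pi := by linarith
  have hs0 : 0 ≤ Real.sin (θ / 2) := Real.sin_nonneg_of_nonneg_of_le_pi
    (by linarith) (by linarith)
  have hsk : Real.sin (θ / 2) ≤ Real.cos (γ / 2) := by
    rw [← Real.sin_pi_div_two_sub]
    exact Real.strictMonoOn_sin.monotoneOn
      ⟨by nlinarith [Real.pi_pos], by linarith⟩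
      ⟨by nlinarith [Real.pi_pos], by linarith⟩ (by linarith)
  have hk1 : Real.cos (γ / 2) ≤ 1 := Real.cos_le_one _
  have hcosθ : Real.cos θ = 1 - 2 * Real.sin (θ / 2) ^ 2 := by
    have h1 := Real.cos_sq (θ / 2)
    have h2 := Real.sin_sq (θ / 2)
    rw [show 2 * (θ / 2) = θ by ring] at h1
    linarith
  have hlaw := EuclideanGeometry.law_cos w α z
  rw [← hθ, hcosθ, dist_comm z α] at hlaw
  rcases le_total (dist w α) (dist α z) with h | h
  · rw [min_eq_left h]
    have := stmt17_key (dist w α) (dist α z) (dist w z) (Real.sin (θ / 2))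
      (Real.cos (γ / 2)) dist_nonneg h dist_nonneg hs0 hsk hk1 (by linear_combination hlaw)
    linarith
  · rw [min_eq_right h]
    have := stmt17_key (dist α z) (dist w α) (dist w z) (Real.sin (θ / 2))
      (Real.cos (γ / 2)) dist_nonneg h dist_nonneg hs0 hsk hk1 (by linear_combination hlaw)
    linarith
end

section
/- Run Kruskal's greedy matching-into-path procedure on a finite metric space X = A ∪ B where every pairwise distance within A is less than 1, and every distance between A and B is greater than R > 2·|A|. Then every edge selected by the greedy TSP heuristic (repeatedly adding the globally shortest edge not creating a cycle or a degree-3 vertex) with both endpoints determined before any A–B edge is selected covers all of A by a collection of paths; in particular, the set of greedy-selected edges within A depends only on the metric restricted to A (and the tie-breaking order), not on the positions of points in B. -/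
/-!
Two distinct points of `A` force `R > 4`, so every edge inside `A` is shorter than every edge
between `A` and `B`. When greedy selects an edge, each internal edge still valid at that moment
would have beaten it, and validity only shrinks as the run proceeds: hence no internal edge is
selected after a crossing one. Up to the first crossing edge no selected edge leaves `A`, so the
validity of an internal edge depends only on the internal edges chosen so far; the internal edges
of the run therefore form a run of the greedy heuristic restricted to `A`, which is determined by
`d` on `A` and the injective tie-break. Finally, the components of an edge set built from valid
edges are paths; a point of `A` left untouched could be joined to an endpoint of the path through
another point of `A` by a valid internal edge, which the run would have selected.
-/

/-- Degree of a vertex in a list of edges. -/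
def degIn {α : Type*} [DecidableEq α] (T : List (α × α)) (v : α) : ℕ :=
  (T.filter (fun e => e.1 = v ∨ e.2 = v)).length

/-- Connectivity of two vertices via the edges of `T`. -/
def conn {α : Type*} (T : List (α × α)) (u v : α) : Prop :=
  Relation.ReflTransGen (fun x y => (x, y) ∈ T ∨ (y, x) ∈ T) u v

/-- An edge is valid at state `T` for the greedy TSP heuristic: it is a non-loop,
creates no vertex of degree 3 and closes no cycle. -/
def validEdge {α : Type*} [DecidableEq α] (T : List (α × α)) (e : α × α) : Prop :=
  e.1 ≠ e.2 ∧ degIn T e.1 ≤ 1 ∧ degIn T e.2 ≤ 1 ∧ ¬ conn T e.1 e.2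

/-- `L` is a complete run of the greedy TSP heuristic for the distance function `d`
with tie-breaking order `tb`: each selected edge is valid and of minimum length
(ties broken by `tb`) among the valid edges at that moment, and no valid edge
remains at the end. -/
def IsGreedyRun {α : Type*} [DecidableEq α] (d : α → α → ℝ) (tb : α × α → ℕ)
    (L : List (α × α)) : Prop :=
  (∀ i : Fin L.length,
      validEdge (L.take i.val) (L.get i) ∧
      ∀ e : α × α, validEdge (L.take i.val) e →
        d (L.get i).1 (L.get i).2 < d e.1 e.2 ∨
        (d (L.get i).1 (L.get i).2 = d e.1 e.2 ∧ tb (L.get i) ≤ tb e)) ∧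
  ∀ e : α × α, ¬ validEdge L e

namespace conn

variable {α : Type*} {T T' : List (α × α)} {u v w : α}

theorem symm (h : conn T u v) : conn T v u :=
  Relation.ReflTransGen.mono (fun _ _ h => h.symm) _ _ h.swap

theorem trans (h : conn T u v) (h' : conn T v w) : conn T u w :=
  Relation.ReflTransGen.trans h h'

theorem mono (hT : T ⊆ T') (h : conn T u v) : conn T' u v :=
  Relation.ReflTransGen.mono (fun _ _ => Or.imp (@hT _) (@hT _)) _ _ h

theorem mem_of_mem {A : Finset α} (hT : ∀ e ∈ T, e.1 ∈ A ↔ e.2 ∈ A) (h : conn T u v)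
    (hu : u ∈ A) : v ∈ A := by
  induction h with
  | refl => exact hu
  | tail _ hstep ih =>
    rcases hstep with hstep | hstep
    · exact (hT _ hstep).1 ih
    · exact (hT _ hstep).2 ih

theorem eq_of_isolated (hv : ∀ e ∈ T, e.1 ≠ v ∧ e.2 ≠ v) (h : conn T v w) : w = v := by
  rcases Relation.ReflTransGen.cases_head h with rfl | ⟨c, hstep, -⟩
  · rfl
  · rcases hstep with hstep | hstep
    · exact absurd rfl (hv _ hstep).1
    · exact absurd rfl (hv _ hstep).2

end conn

section Separation

variable {α : Type*}

def IsCrossing (A B : Finset α) (e : α × α) : Prop :=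
  (e.1 ∈ A ∧ e.2 ∈ B) ∨ (e.1 ∈ B ∧ e.2 ∈ A)

theorem mem_iff_mem_of_not_isCrossing {A B : Finset α} (hpart : ∀ v, v ∈ A ∨ v ∈ B)
    {f : α × α} (hf : ¬ IsCrossing A B f) : f.1 ∈ A ↔ f.2 ∈ A := by
  have := hpart f.1
  have := hpart f.2
  unfold IsCrossing at hf
  tauto

def InternalShorter (d : α → α → ℝ) (A B : Finset α) : Prop :=
  ∀ e f : α × α, e.1 ∈ A → e.2 ∈ A → e.1 ≠ e.2 → IsCrossing A B f → d e.1 e.2 < d f.1 f.2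

theorem internalShorter_of_dist {A B : Finset α} {d : α → α → ℝ} {R : ℝ}
    (hsymm : ∀ u v, d u v = d v u) (hin : ∀ u ∈ A, ∀ v ∈ A, u ≠ v → d u v < 1)
    (hcross : ∀ u ∈ A, ∀ v ∈ B, R < d u v) (hR : 2 * (A.card : ℝ) < R) :
    InternalShorter d A B := by
  intro e f he₁ he₂ hne hf
  have hA : (2 : ℝ) ≤ A.card := by exact_mod_cast Finset.one_lt_card.2 ⟨_, he₁, _, he₂, hne⟩
  have hf : R < d f.1 f.2 := by
    rcases hf with ⟨hf₁, hf₂⟩ | ⟨hf₁, hf₂⟩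
    · exact hcross _ hf₁ _ hf₂
    · exact hsymm f.1 f.2 ▸ hcross _ hf₂ _ hf₁
  linarith [hin _ he₁ _ he₂ hne]

def Beats (d : α → α → ℝ) (tb : α × α → ℕ) (x e : α × α) : Prop :=
  d x.1 x.2 < d e.1 e.2 ∨ (d x.1 x.2 = d e.1 e.2 ∧ tb x ≤ tb e)

theorem Beats.le {d : α → α → ℝ} {tb : α × α → ℕ} {x e : α × α} (h : Beats d tb x e) :
    d x.1 x.2 ≤ d e.1 e.2 :=
  h.elim le_of_lt fun h => h.1.le

theorem Beats.antisymm {d : α → α → ℝ} {tb : α × α → ℕ} (htb : Function.Injective tb)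
    {x y : α × α} (hxy : Beats d tb x y) (hyx : Beats d tb y x) : x = y := by
  unfold Beats at hxy hyx
  rcases hxy with hxy | ⟨hxy, htxy⟩ <;> rcases hyx with hyx | ⟨hyx, htyx⟩
  · linarith
  · linarith
  · linarith
  · exact htb (htxy.antisymm htyx)

end Separation

section Greedy

variable {α : Type*} [DecidableEq α]

theorem degIn_append_singleton (T : List (α × α)) (e : α × α) (v : α) :
    degIn (T ++ [e]) v = degIn T v + if e.1 = v ∨ e.2 = v then 1 else 0 := by
  by_cases h : e.1 = v ∨ e.2 = v <;> simp [degIn, h]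

theorem degIn_eq_zero {T : List (α × α)} {v : α} (hv : ∀ e ∈ T, e.1 ≠ v ∧ e.2 ≠ v) :
    degIn T v = 0 := by
  simpa [degIn, List.filter_eq_nil_iff] using hv

theorem validEdge.of_sublist {T T' : List (α × α)} {e : α × α} (h : T.Sublist T')
    (he : validEdge T' e) : validEdge T e :=
  ⟨he.1, (List.Sublist.length_le (h.filter _)).trans he.2.1,
    (List.Sublist.length_le (h.filter _)).trans he.2.2.1,
    fun hc => he.2.2.2 (hc.mono h.subset)⟩

/-- The invariant of a greedy run: its components are paths, so every vertex that is not
isolated reaches an endpoint other than itself. -/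
def ReachesEnd (T : List (α × α)) : Prop :=
  ∀ v : α, ∃ w, conn T v w ∧ degIn T w ≤ 1 ∧ (w = v → degIn T v = 0)

theorem ReachesEnd.nil : ReachesEnd ([] : List (α × α)) :=
  fun v => ⟨v, .refl, by simp [degIn], fun _ => by simp [degIn]⟩

theorem ReachesEnd.exists_end_snoc {T : List (α × α)} (hT : ReachesEnd T) {e : α × α}
    {x y : α} (hxy : ¬ conn T x y) (he : ∀ w, e.1 = w ∨ e.2 = w → w = x ∨ w = y) :
    ∃ w, conn T x w ∧ degIn (T ++ [e]) w ≤ 1 := by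
  obtain ⟨w, hxw, hw, hwx⟩ := hT x
  refine ⟨w, hxw, ?_⟩
  rw [degIn_append_singleton]
  by_cases hwx' : w = x
  · have := hwx hwx'
    subst hwx'
    split <;> omega
  · have hwe : ¬ (e.1 = w ∨ e.2 = w) := fun hwe =>
      (he w hwe).elim hwx' fun hwy => hxy (hwy ▸ hxw)
    simpa [hwe] using hw

theorem ReachesEnd.snoc {T : List (α × α)} (hT : ReachesEnd T) {e : α × α}
    (he : validEdge T e) : ReachesEnd (T ++ [e]) := by
  have hsub : T ⊆ T ++ [e] := List.subset_append_left T [e]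
  intro v
  by_cases hv : conn (T ++ [e]) v e.1
  · obtain ⟨w₁, h₁, hw₁⟩ := hT.exists_end_snoc he.2.2.2 fun _ h => h.imp Eq.symm Eq.symm
    obtain ⟨w₂, h₂, hw₂⟩ := hT.exists_end_snoc (fun h => he.2.2.2 h.symm)
      fun _ h => (h.imp Eq.symm Eq.symm).symm
    have hne : w₁ ≠ w₂ := fun h => he.2.2.2 (h₁.trans (h ▸ h₂.symm))
    have he₁₂ : conn (T ++ [e]) e.1 e.2 := .single (Or.inl (by simp))
    by_cases hvw : v = w₁
    · exact ⟨w₂, hv.trans (he₁₂.trans (h₂.mono hsub)), hw₂, fun h => absurd (hvw ▸ h) hne.symm⟩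
    · exact ⟨w₁, hv.trans (h₁.mono hsub), hw₁, fun h => absurd h.symm hvw⟩
  · obtain ⟨w, hvw, hw, hwv⟩ := hT v
    have hwT : ∀ u, conn T v u → ¬ (e.1 = u ∨ e.2 = u) := by
      rintro u hvu (rfl | rfl)
      · exact hv (hvu.mono hsub)
      · exact hv ((hvu.mono hsub).trans (.single (Or.inr (by simp))))
    refine ⟨w, hvw.mono hsub, ?_, ?_⟩
    · simpa [degIn_append_singleton, hwT w hvw] using hw
    · simpa [degIn_append_singleton, hwT v .refl] using hwv

theorem IsGreedyRun.beats_of_eq_append {d : α → α → ℝ} {tb : α × α → ℕ}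
    {L P S : List (α × α)} {x : α × α} (hL : IsGreedyRun d tb L) (h : L = P ++ x :: S) :
    validEdge P x ∧ ∀ e, validEdge P e → Beats d tb x e := by
  subst h
  simpa [Beats] using hL.1 ⟨P.length, by simp⟩

def internalEdges (A : Finset α) (T : List (α × α)) : List (α × α) :=
  T.filter fun e => e.1 ∈ A ∧ e.2 ∈ A

section Internal

variable {A : Finset α} {T : List (α × α)}

theorem mem_internalEdges {e : α × α} :
    e ∈ internalEdges A T ↔ e ∈ T ∧ e.1 ∈ A ∧ e.2 ∈ A := by
  simp [internalEdges]

theorem internalEdges_append (T' : List (α × α)) :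
    internalEdges A (T ++ T') = internalEdges A T ++ internalEdges A T' :=
  List.filter_append _ _

theorem degIn_internalEdges (hT : ∀ f ∈ T, f.1 ∈ A ↔ f.2 ∈ A) {v : α} (hv : v ∈ A) :
    degIn (internalEdges A T) v = degIn T v := by
  unfold degIn internalEdges
  rw [List.filter_filter]
  congr 1
  refine List.filter_congr fun f hf => ?_
  have := hT f hf
  by_cases h : f.1 = v ∨ f.2 = v
  · rcases h with rfl | rfl <;> simp_all
  · simp [h]

theorem conn_internalEdges (hT : ∀ f ∈ T, f.1 ∈ A ↔ f.2 ∈ A) {u v : α} (hu : u ∈ A)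
    (h : conn T u v) : conn (internalEdges A T) u v := by
  induction h with
  | refl => exact .refl
  | tail hbc hstep ih =>
    have hb := conn.mem_of_mem hT hbc hu
    refine ih.tail (hstep.imp (fun h => ?_) (fun h => ?_))
    · exact mem_internalEdges.2 ⟨h, hb, (hT _ h).1 hb⟩
    · exact mem_internalEdges.2 ⟨h, (hT _ h).2 hb, hb⟩

theorem validEdge_internalEdges_iff (hT : ∀ f ∈ T, f.1 ∈ A ↔ f.2 ∈ A) {e : α × α}
    (he₁ : e.1 ∈ A) (he₂ : e.2 ∈ A) : validEdge (internalEdges A T) e ↔ validEdge T e := by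
  unfold validEdge
  rw [degIn_internalEdges hT he₁, degIn_internalEdges hT he₂]
  refine and_congr_right fun _ => and_congr_right fun _ => and_congr_right fun _ => not_congr ?_
  exact ⟨fun h => h.mono List.filter_sublist.subset, conn_internalEdges hT he₁⟩

end Internal

section Run

variable {A B : Finset α} {d : α → α → ℝ} {tb : α × α → ℕ} {L : List (α × α)}

theorem IsGreedyRun.not_crossing_before_internal (hL : IsGreedyRun d tb L)
    (hsep : InternalShorter d A B) {P S : List (α × α)} {f g : α × α} (h : L = P ++ f :: S)
    (hf : IsCrossing A B f) (hg : g ∈ f :: S) (hg₁ : g.1 ∈ A) (hg₂ : g.2 ∈ A) : False := by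
  obtain ⟨Q, S', hQ⟩ := List.append_of_mem hg
  have hg_valid : validEdge (P ++ Q) g :=
    (hL.beats_of_eq_append (by rw [h, hQ, List.append_assoc])).1
  have hfg := (hL.beats_of_eq_append h).2 g (hg_valid.of_sublist (List.sublist_append_left P Q))
  exact (hfg.le.trans_lt (hsep g f hg₁ hg₂ hg_valid.1 hf)).false

theorem IsGreedyRun.not_isCrossing_of_eq_append (hL : IsGreedyRun d tb L)
    (hsep : InternalShorter d A B) {P S : List (α × α)} {g : α × α} (h : L = P ++ g :: S)
    (hg₁ : g.1 ∈ A) (hg₂ : g.2 ∈ A) : ∀ f ∈ P, ¬ IsCrossing A B f := by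
  intro f hf hcross
  obtain ⟨P₁, P₂, rfl⟩ := List.append_of_mem hf
  exact hL.not_crossing_before_internal hsep (P := P₁) (S := P₂ ++ g :: S)
    (by simp [h]) hcross (by simp)
    hg₁ hg₂

theorem IsGreedyRun.lt_of_internal_of_crossing (hL : IsGreedyRun d tb L)
    (hsep : InternalShorter d A B) (i j : Fin L.length) (hi₁ : (L.get i).1 ∈ A)
    (hi₂ : (L.get i).2 ∈ A) (hj : IsCrossing A B (L.get j)) : (i : ℕ) < j := by
  by_contra! hji
  have hsplit : L = L.take j ++ L.get j :: L.drop (j + 1) := by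
    simp
  refine hL.not_crossing_before_internal hsep hsplit hj ?_ hi₁ hi₂
  have : L.get i = (L.drop j)[(i : ℕ) - j]'(by simp; omega) := by
    simp [Nat.add_sub_cancel' hji]
  rw [this, List.get_eq_getElem, ← List.drop_eq_getElem_cons]
  exact List.getElem_mem _

theorem IsGreedyRun.not_validEdge_internalEdges (hL : IsGreedyRun d tb L)
    (hpart : ∀ v, v ∈ A ∨ v ∈ B) (hsep : InternalShorter d A B) {e : α × α}
    (he₁ : e.1 ∈ A) (he₂ : e.2 ∈ A) : ¬ validEdge (internalEdges A L) e := by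
  set p : α × α → Bool := fun f => f.1 ∈ A ↔ f.2 ∈ A
  have hP : ∀ f ∈ L.takeWhile p, f.1 ∈ A ↔ f.2 ∈ A := fun f hf => by
    simpa [p] using List.mem_takeWhile_imp hf
  intro hv
  rcases hD : L.dropWhile p with _ | ⟨f, S⟩
  · have hL' : ∀ f ∈ L, f.1 ∈ A ↔ f.2 ∈ A := fun f hf => by
      simpa [p] using List.dropWhile_eq_nil_iff.1 hD f hf
    exact hL.2 e ((validEdge_internalEdges_iff hL' he₁ he₂).1 hv)
  · have hsplit : L = L.takeWhile p ++ f :: S := by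
      rw [← hD, List.takeWhile_append_dropWhile]
    have hf : IsCrossing A B f := by
      by_contra hf
      have := List.head?_dropWhile_not p L
      rw [hD] at this
      simp only [List.head?_cons, p, decide_eq_false_iff_not] at this
      exact this (mem_iff_mem_of_not_isCrossing hpart hf)
    have hS : internalEdges A (f :: S) = [] := List.filter_eq_nil_iff.2 fun g hg hgA => by
      simp only [decide_eq_true_eq] at hgA
      exact hL.not_crossing_before_internal hsep hsplit hf hg hgA.1 hgA.2
    have hint : internalEdges A L = internalEdges A (L.takeWhile p) := by
      conv_lhs => rw [hsplit, internalEdges_append, hS, List.append_nil]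
    rw [hint, validEdge_internalEdges_iff hP he₁ he₂] at hv
    have hfe := (hL.beats_of_eq_append hsplit).2 e hv
    exact (hfe.le.trans_lt (hsep e f he₁ he₂ hv.1 hf)).false

def InternalGreedy (A : Finset α) (d : α → α → ℝ) (tb : α × α → ℕ) :
    List (α × α) → List (α × α) → Prop
  | P, [] => ∀ e : α × α, e.1 ∈ A → e.2 ∈ A → ¬ validEdge P e
  | P, x :: M => x.1 ∈ A ∧ x.2 ∈ A ∧ validEdge P x ∧
      (∀ e : α × α, e.1 ∈ A → e.2 ∈ A → validEdge P e → Beats d tb x e) ∧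
      InternalGreedy A d tb (P ++ [x]) M

theorem IsGreedyRun.internalGreedy (hL : IsGreedyRun d tb L) (hpart : ∀ v, v ∈ A ∨ v ∈ B)
    (hsep : InternalShorter d A B) : InternalGreedy A d tb [] (internalEdges A L) := by
  suffices h : ∀ S P, L = P ++ S →
      InternalGreedy A d tb (internalEdges A P) (internalEdges A S) from h L [] rfl
  intro S
  induction S with
  | nil =>
    intro P h
    rw [List.append_nil] at h
    subst h
    exact fun e he₁ he₂ => hL.not_validEdge_internalEdges hpart hsep he₁ he₂
  | cons x S ih =>
    intro P h
    have hS := ih (P ++ [x]) (by simp [h])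
    rw [internalEdges_append] at hS
    by_cases hx : x.1 ∈ A ∧ x.2 ∈ A
    · have hP : ∀ f ∈ P, f.1 ∈ A ↔ f.2 ∈ A := fun f hf => mem_iff_mem_of_not_isCrossing hpart
        (hL.not_isCrossing_of_eq_append hsep h hx.1 hx.2 f hf)
      obtain ⟨hxv, hxb⟩ := hL.beats_of_eq_append h
      simp only [internalEdges, List.filter_cons, hx] at hS ⊢
      exact ⟨hx.1, hx.2, (validEdge_internalEdges_iff hP hx.1 hx.2).2 hxv,
        fun e he₁ he₂ he => hxb e ((validEdge_internalEdges_iff hP he₁ he₂).1 he), hS⟩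
    · simpa [internalEdges, hx] using hS

end Run

namespace InternalGreedy

variable {A : Finset α} {d : α → α → ℝ} {tb : α × α → ℕ}

theorem eq {d' : α → α → ℝ} (htb : Function.Injective tb)
    (hagree : ∀ u ∈ A, ∀ v ∈ A, d u v = d' u v) {P M M' : List (α × α)}
    (h : InternalGreedy A d tb P M) (h' : InternalGreedy A d' tb P M') : M = M' := by
  induction M generalizing P M' with
  | nil =>
    cases M' with
    | nil => rfl
    | cons x' M' => exact absurd h'.2.2.1 (h x' h'.1 h'.2.1)
  | cons x M ih =>
    cases M' with
    | nil => exact absurd h.2.2.1 (h' x h.1 h.2.1)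
    | cons x' M' =>
      obtain ⟨hx₁, hx₂, hxv, hxb, hM⟩ := h
      obtain ⟨hx₁', hx₂', hxv', hxb', hM'⟩ := h'
      have hx'x : Beats d tb x' x := by
        simpa only [Beats, hagree _ hx₁ _ hx₂, hagree _ hx₁' _ hx₂'] using hxb' x hx₁ hx₂ hxv
      obtain rfl := (hxb x' hx₁' hx₂' hxv').antisymm htb hx'x
      rw [ih hM hM']

theorem reachesEnd {P M : List (α × α)} (h : InternalGreedy A d tb P M) (hP : ReachesEnd P) :
    ReachesEnd (P ++ M) := by
  induction M generalizing P with
  | nil => simpa using hP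
  | cons x M ih => simpa using ih h.2.2.2.2 (hP.snoc h.2.2.1)

end InternalGreedy

theorem ReachesEnd.exists_incident {A : Finset α} {T : List (α × α)} (hT : ReachesEnd T)
    (hTA : ∀ e ∈ T, e.1 ∈ A ∧ e.2 ∈ A) (hmax : ∀ e : α × α, e.1 ∈ A → e.2 ∈ A → ¬ validEdge T e)
    (hA : 2 ≤ A.card) {a : α} (ha : a ∈ A) : ∃ e ∈ T, e.1 = a ∨ e.2 = a := by
  by_contra! hiso
  obtain ⟨b, hb, hba⟩ := Finset.exists_mem_ne (by omega : 1 < A.card) a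
  obtain ⟨w, hbw, hw, -⟩ := hT b
  have hwA : w ∈ A := hbw.mem_of_mem (fun e he => iff_of_true (hTA e he).1 (hTA e he).2) hb
  have haw : ¬ conn T a w := fun h =>
    hba ((h.eq_of_isolated hiso ▸ hbw).symm.eq_of_isolated hiso)
  exact hmax (a, w) ha hwA
    ⟨fun (h : a = w) => haw (h ▸ .refl), by simp [degIn_eq_zero hiso], hw, haw⟩

end Greedy

theorem stmt19_general {α : Type*} [DecidableEq α]
    (A B : Finset α) (hpart : ∀ v : α, v ∈ A ∨ v ∈ B)
    (d d' : α → α → ℝ) (R : ℝ)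
    (hsymm : ∀ u v, d u v = d v u) (hsymm' : ∀ u v, d' u v = d' v u)
    (hagree : ∀ u ∈ A, ∀ v ∈ A, d u v = d' u v)
    (hin : ∀ u ∈ A, ∀ v ∈ A, u ≠ v → d u v < 1)
    (hcross : ∀ u ∈ A, ∀ v ∈ B, R < d u v ∧ R < d' u v)
    (hR : 2 * (A.card : ℝ) < R)
    (tb : α × α → ℕ) (htb : Function.Injective tb)
    (L L' : List (α × α))
    (hL : IsGreedyRun d tb L) (hL' : IsGreedyRun d' tb L') :
    (∀ e : α × α, (e ∈ L ∧ e.1 ∈ A ∧ e.2 ∈ A) ↔ (e ∈ L' ∧ e.1 ∈ A ∧ e.2 ∈ A)) ∧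
    (∀ i j : Fin L.length,
        (L.get i).1 ∈ A → (L.get i).2 ∈ A →
        (((L.get j).1 ∈ A ∧ (L.get j).2 ∈ B) ∨
          ((L.get j).1 ∈ B ∧ (L.get j).2 ∈ A)) →
        (i : ℕ) < (j : ℕ)) ∧
    (2 ≤ A.card → ∀ a ∈ A, ∃ e ∈ L, (e.1 ∈ A ∧ e.2 ∈ A) ∧ (e.1 = a ∨ e.2 = a)) := by
  have hin' : ∀ u ∈ A, ∀ v ∈ A, u ≠ v → d' u v < 1 := fun u hu v hv huv =>
    hagree u hu v hv ▸ hin u hu v hv huv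
  have hsep := internalShorter_of_dist hsymm hin (fun u hu v hv => (hcross u hu v hv).1) hR
  have hsep' := internalShorter_of_dist hsymm' hin' (fun u hu v hv => (hcross u hu v hv).2) hR
  have hG := hL.internalGreedy hpart hsep
  refine ⟨fun e => ?_, hL.lt_of_internal_of_crossing hsep, fun hA a ha => ?_⟩
  · rw [← mem_internalEdges, ← mem_internalEdges,
      hG.eq htb hagree (hL'.internalGreedy hpart hsep')]
  · have hI : ReachesEnd (internalEdges A L) := by simpa using hG.reachesEnd ReachesEnd.nil
    obtain ⟨e, he, hea⟩ := hI.exists_incident (fun e he => (mem_internalEdges.1 he).2)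
      (fun e he₁ he₂ => hL.not_validEdge_internalEdges hpart hsep he₁ he₂) hA ha
    exact ⟨e, (mem_internalEdges.1 he).1, (mem_internalEdges.1 he).2, hea⟩

/-- locality of the greedy TSP heuristic: if the cluster `A` has all
internal distances < 1 and is at distance > R > 2|A| from `B`, then greedy covers
all of `A` by paths before selecting any `A`–`B` edge, and the set of greedy-selected
edges inside `A` depends only on the metric restricted to `A` (and the tie-breaking
order), not on the positions of the points of `B`. -/
theorem stmt19 {α : Type*} [Fintype α] [DecidableEq α]
    (A B : Finset α) (hpart : ∀ v : α, v ∈ A ∨ v ∈ B) (hdisj : Disjoint A B)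
    (d d' : α → α → ℝ) (R : ℝ)
    (hsymm : ∀ u v, d u v = d v u) (hsymm' : ∀ u v, d' u v = d' v u)
    (hagree : ∀ u ∈ A, ∀ v ∈ A, d u v = d' u v)
    (hin : ∀ u ∈ A, ∀ v ∈ A, u ≠ v → d u v < 1)
    (hcross : ∀ u ∈ A, ∀ v ∈ B, R < d u v ∧ R < d' u v)
    (hR : 2 * (A.card : ℝ) < R)
    (tb : α × α → ℕ) (htb : Function.Injective tb)
    (L L' : List (α × α))
    (hL : IsGreedyRun d tb L) (hL' : IsGreedyRun d' tb L') :
    (∀ e : α × α, (e ∈ L ∧ e.1 ∈ A ∧ e.2 ∈ A) ↔ (e ∈ L' ∧ e.1 ∈ A ∧ e.2 ∈ A)) ∧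
    (∀ i j : Fin L.length,
        (L.get i).1 ∈ A → (L.get i).2 ∈ A →
        (((L.get j).1 ∈ A ∧ (L.get j).2 ∈ B) ∨
          ((L.get j).1 ∈ B ∧ (L.get j).2 ∈ A)) →
        (i : ℕ) < (j : ℕ)) ∧
    (2 ≤ A.card → ∀ a ∈ A, ∃ e ∈ L, (e.1 ∈ A ∧ e.2 ∈ A) ∧ (e.1 = a ∨ e.2 = a)) :=
  stmt19_general A B hpart d d' R hsymm hsymm' hagree hin hcross hR tb htb L L' hL hL'
end
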